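/- The characteristic polynomial of the 3×3 real matrix A_c^TV is X·(X − u)²; moreover, if u ≠ 0, the eigenspace ker(A_c^TV − u·I) is exactly the one-dimensional span of the vector (1, u, u²/2), so the eigenvalue u (of algebraic multiplicity 2) has geometric multiplicity 1 and A_c^TV does not have a complete set of linearly independent eigenvectors (the convection subsystem is weakly hyperbolic). The eigenspace for the eigenvalue 0 is spanned by (0, 0, 1). -/
import Mathlib


open Polynomial

/-- The Toro–Vázquez convection flux Jacobian of the 1-D Euler system. -/
noncomputable def AcTV (u : ℝ) : Matrix (Fin 3) (Fin 3) ℝ :=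
  !![0, 1, 0;
     -u^2, 2*u, 0;
     -u^3, (3/2)*u^2, 0]

/-- The characteristic polynomial of `A_c^TV` is `X·(X − u)²`; for `u ≠ 0`, the
eigenspace for the eigenvalue `u` is exactly the span of `(1, u, u²/2)` (geometric
multiplicity 1, so `A_c^TV` has no complete set of linearly independent eigenvectors),
and the eigenspace for the eigenvalue `0` is spanned by `(0, 0, 1)`. -/
theorem charpoly_eigenspaces_AcTV (u : ℝ) :
    (AcTV u).charpoly = X * (X - C u)^2 ∧
    (u ≠ 0 →
      (∀ x : Fin 3 → ℝ, (AcTV u).mulVec x = u • x ↔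
        ∃ c : ℝ, x = c • ![1, u, u^2/2]) ∧
      (∀ x : Fin 3 → ℝ, (AcTV u).mulVec x = 0 ↔
        ∃ c : ℝ, x = c • ![0, 0, 1])) := by
  constructor
  · rw [Matrix.charpoly, Matrix.det_fin_three]
    simp [AcTV, Matrix.charmatrix_apply, Matrix.vecHead, Matrix.vecTail, map_ofNat]
    ring
  · intro hu
    constructor
    · intro x
      constructor
      · intro h
        have h0 := congrFun h 0
        have h1 := congrFun h 1
        have h2 := congrFun h 2
        simp [AcTV, Matrix.mulVec, dotProduct, Fin.sum_univ_three] at h0 h1 h2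
        refine ⟨x 0, ?_⟩
        funext i
        fin_cases i <;> simp
        · nlinarith [h0, h1]
        · have key : u * x 2 = u * (x 0 * (u ^ 2 / 2)) := by nlinarith [h0, h1, h2]
          exact mul_left_cancel₀ hu key
      · rintro ⟨c, rfl⟩
        funext i
        fin_cases i <;>
          simp [AcTV, Matrix.mulVec, dotProduct, Fin.sum_univ_three] <;> ring
    · intro x
      constructor
      · intro h
        have h0 := congrFun h 0
        have h1 := congrFun h 1
        have h2 := congrFun h 2
        simp [AcTV, Matrix.mulVec, dotProduct, Fin.sum_univ_three] at h0 h1 h2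
        refine ⟨x 2, ?_⟩
        funext i
        have hx0 : x 0 = 0 := by
          have : u ^ 2 * x 0 = 0 := by nlinarith [h0, h1]
          exact (mul_eq_zero.mp this).resolve_left (pow_ne_zero 2 hu)
        fin_cases i <;> simp [hx0, h0]
      · rintro ⟨c, rfl⟩
        funext i
        fin_cases i <;>
          simp [AcTV, Matrix.mulVec, dotProduct, Fin.sum_univ_three]
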